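/- arXiv:2308.16193 — 2 statements merged into one kernel-verified Lean document; each statement's English description precedes it below -/
import Mathlib

section
/- Let ν₀ > 0, ε > 0, and let N : ℝ → ℝ be continuously differentiable with N(0) = 0, N'(0) = 0, and |N''| ≤ K on a neighborhood of 0 (so |N(x)| ≤ (K/2)x² for |x| small). Consider the integral equation η̂(y) = e^{-a y} η̂₀ + (1/ε) ∫_0^y e^{-a(y−s)} N(η̂(s)) ds for y ≥ 0, where a ≥ ν₀/ε. If |η̂₀| is sufficiently small (depending on ν₀, ε, K), then there exists a unique continuous solution η̂ on [0,∞) satisfying |η̂(y)| ≤ C |η̂₀| e^{-(ν₀/ε) y} for all y ≥ 0, for some constant C > 0. -/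
/-!
Instead of the weighted norm of the paper, the contraction is run in the sup metric on the set of
bounded continuous functions with `|g y| ≤ 2 |η₀| e^{-b y}`, `b = ν₀ / ε`. The Duhamel map preserves
this set because the quadratic bound on `N` turns the decay rate `b` into `2 b`, and the kernel
`e^{-a (y - s)}` with `a ≥ b` brings it back to `b` at the cost of a factor `1 / b`. It contracts in
the sup metric because `N'(0) = 0` makes `N` Lipschitz near `0` with constant at most `ε a / 2`,
while the kernel has mass at most `1 / a`. Every continuous solution with the decay bound lies in
the set, which gives uniqueness.
-/

open Set Real intervalIntegral
open scoped NNReal BoundedContinuousFunction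

theorem integral_exp_mul_exp (a c y : ℝ) (h : a ≠ c) :
    ∫ s in (0:ℝ)..y, exp (-a * (y - s)) * exp (-c * s) =
      (exp (-c * y) - exp (-a * y)) / (a - c) := by
  have hac : a - c ≠ 0 := sub_ne_zero.mpr h
  have hsplit : ∀ s, exp (-a * (y - s)) * exp (-c * s) = exp (-a * y) * exp ((a - c) * s) := by
    intro s; rw [← exp_add, ← exp_add]; ring_nf
  simp_rw [hsplit, integral_const_mul, integral_comp_mul_left (fun s => exp s) hac, integral_exp,
    smul_eq_mul, mul_zero, exp_zero]
  field_simp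
  rw [mul_sub, ← exp_add]
  ring_nf

theorem abs_integral_exp_mul_le {f : ℝ → ℝ} {a a₀ c M y : ℝ} (ha : a₀ ≤ a) (hc : a₀ ≠ c)
    (hy : 0 ≤ y) (hf : ∀ s ∈ Icc 0 y, |f s| ≤ M * exp (-c * s)) :
    |∫ s in (0:ℝ)..y, exp (-a * (y - s)) * f s| ≤
      M * ((exp (-c * y) - exp (-a₀ * y)) / (a₀ - c)) := by
  rw [← integral_exp_mul_exp a₀ c y hc, ← integral_const_mul, ← Real.norm_eq_abs]
  refine norm_integral_le_of_norm_le hy (Filter.Eventually.of_forall fun s hs => ?_)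
    (Continuous.intervalIntegrable (by fun_prop) _ _)
  have hfs := hf s (Ioc_subset_Icc_self hs)
  have hkernel : exp (-a * (y - s)) ≤ exp (-a₀ * (y - s)) :=
    exp_le_exp.mpr (by nlinarith [hs.2])
  rw [Real.norm_eq_abs, abs_mul, abs_of_pos (exp_pos _)]
  calc exp (-a * (y - s)) * |f s| ≤ exp (-a₀ * (y - s)) * (M * exp (-c * s)) :=
        mul_le_mul hkernel hfs (abs_nonneg _) (exp_pos _).le
    _ = _ := by ring

theorem abs_integral_exp_mul_le_of_lt {f : ℝ → ℝ} {a a₀ c M y : ℝ} (ha : a₀ ≤ a) (hc : c < a₀)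
    (hM : 0 ≤ M) (hy : 0 ≤ y) (hf : ∀ s ∈ Icc 0 y, |f s| ≤ M * exp (-c * s)) :
    |∫ s in (0:ℝ)..y, exp (-a * (y - s)) * f s| ≤ M * exp (-c * y) / (a₀ - c) := by
  refine (abs_integral_exp_mul_le ha hc.ne' hy hf).trans ?_
  rw [mul_div_assoc]
  gcongr
  exact sub_le_self _ (exp_pos _).le

theorem abs_integral_exp_mul_le_of_gt {f : ℝ → ℝ} {a a₀ c M y : ℝ} (ha : a₀ ≤ a) (hc : a₀ < c)
    (hM : 0 ≤ M) (hy : 0 ≤ y) (hf : ∀ s ∈ Icc 0 y, |f s| ≤ M * exp (-c * s)) :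
    |∫ s in (0:ℝ)..y, exp (-a * (y - s)) * f s| ≤ M * exp (-a₀ * y) / (c - a₀) := by
  refine (abs_integral_exp_mul_le ha hc.ne hy hf).trans ?_
  rw [mul_div_assoc, ← neg_sub c a₀, div_neg, ← neg_div, neg_sub]
  gcongr
  exact sub_le_self _ (exp_pos _).le

theorem exists_lipschitzOnWith_closedBall_of_deriv_eq_zero {N : ℝ → ℝ} (hN : ContDiff ℝ 1 N)
    (h0 : deriv N 0 = 0) {L : ℝ≥0} (hL : 0 < L) :
    ∃ ρ > 0, LipschitzOnWith L N (Metric.closedBall 0 ρ) := by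
  have hfderiv : ‖fderiv ℝ N 0‖₊ < L := by
    rwa [← NNReal.coe_lt_coe, coe_nnnorm, ← norm_deriv_eq_norm_fderiv, h0, norm_zero]
  obtain ⟨t, ht, hlip⟩ := hN.contDiffAt.exists_lipschitzOnWith_of_nnnorm_lt L hfderiv
  obtain ⟨ρ, hρ, hball⟩ := Metric.mem_nhds_iff.mp ht
  exact ⟨ρ / 2, half_pos hρ,
    hlip.mono ((Metric.closedBall_subset_ball (half_lt_self hρ)).trans hball)⟩

theorem abs_le_of_abs_le_mul_exp_neg {x m b y : ℝ} (hb : 0 ≤ b) (hy : 0 ≤ y)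
    (h : |x| ≤ m * exp (-b * y)) : |x| ≤ m :=
  h.trans (mul_le_of_le_one_right ((mul_nonneg_iff_of_pos_right (exp_pos _)).mp
    ((abs_nonneg x).trans h)) (exp_le_one_iff.mpr (by nlinarith)))

section Duhamel

variable {a b ε η₀ K m : ℝ} {N : ℝ → ℝ}

noncomputable def duhamel (a ε η₀ : ℝ) (N η : ℝ → ℝ) (y : ℝ) : ℝ :=
  exp (-a * y) * η₀ + (1 / ε) * ∫ s in (0:ℝ)..y, exp (-a * (y - s)) * N (η s)

theorem continuous_duhamel (hN : Continuous N) {η : ℝ → ℝ} (hη : Continuous η) :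
    Continuous (duhamel a ε η₀ N η) := by
  unfold duhamel
  fun_prop

theorem duhamel_congr {η ζ : ℝ → ℝ} {y : ℝ} (hy : 0 ≤ y) (h : EqOn η ζ (Icc 0 y)) :
    duhamel a ε η₀ N η y = duhamel a ε η₀ N ζ y := by
  unfold duhamel
  congr 2
  refine integral_congr fun s hs => ?_
  rw [uIcc_of_le hy] at hs
  simp only [h hs]

theorem abs_duhamel_le (hb : 0 < b) (hab : b ≤ a) (hε : 0 < ε) (hK : 0 ≤ K)
    (hquad : ∀ x, |x| ≤ m → |N x| ≤ K / 2 * x ^ 2) {η : ℝ → ℝ} {y : ℝ} (hy : 0 ≤ y)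
    (hη : ∀ s ∈ Icc 0 y, |η s| ≤ m * exp (-b * s)) :
    |duhamel a ε η₀ N η y| ≤ (|η₀| + K * m ^ 2 / (2 * ε * b)) * exp (-b * y) := by
  have hNη : ∀ s ∈ Icc 0 y, |N (η s)| ≤ K / 2 * m ^ 2 * exp (-(2 * b) * s) := by
    intro s hs
    calc |N (η s)| ≤ K / 2 * (η s) ^ 2 :=
          hquad _ (abs_le_of_abs_le_mul_exp_neg hb.le hs.1 (hη s hs))
      _ ≤ K / 2 * (m * exp (-b * s)) ^ 2 :=
          mul_le_mul_of_nonneg_left (sq_le_sq' (abs_le.mp (hη s hs)).1 (abs_le.mp (hη s hs)).2)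
            (by positivity)
      _ = K / 2 * m ^ 2 * exp (-(2 * b) * s) := by
          rw [mul_pow, ← exp_nat_mul]
          ring_nf
  have hI := abs_integral_exp_mul_le_of_gt hab (by linarith : b < 2 * b) (by positivity) hy hNη
  have hkernel : exp (-a * y) ≤ exp (-b * y) := exp_le_exp.mpr (by nlinarith)
  calc |duhamel a ε η₀ N η y|
      ≤ exp (-a * y) * |η₀| + (1 / ε) * |∫ s in (0:ℝ)..y, exp (-a * (y - s)) * N (η s)| := by
        unfold duhamel
        refine (abs_add_le _ _).trans_eq ?_
        rw [abs_mul, abs_mul, abs_of_pos (exp_pos _), abs_of_pos (by positivity : 0 < 1 / ε)]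
    _ ≤ exp (-b * y) * |η₀| + (1 / ε) * (K / 2 * m ^ 2 * exp (-b * y) / (2 * b - b)) := by
        gcongr
    _ = (|η₀| + K * m ^ 2 / (2 * ε * b)) * exp (-b * y) := by
        field_simp
        ring

theorem abs_duhamel_sub_le {L : ℝ≥0} {U : Set ℝ} (ha : 0 < a) (hε : 0 < ε) (hN : Continuous N)
    (hlip : LipschitzOnWith L N U) {η ζ : ℝ → ℝ} (hη : Continuous η) (hζ : Continuous ζ)
    {y D : ℝ} (hy : 0 ≤ y) (hD : 0 ≤ D) (hηU : ∀ s ∈ Icc 0 y, η s ∈ U)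
    (hζU : ∀ s ∈ Icc 0 y, ζ s ∈ U) (hdist : ∀ s ∈ Icc 0 y, |η s - ζ s| ≤ D) :
    |duhamel a ε η₀ N η y - duhamel a ε η₀ N ζ y| ≤ L * D / (ε * a) := by
  have hsub : duhamel a ε η₀ N η y - duhamel a ε η₀ N ζ y =
      (1 / ε) * ∫ s in (0:ℝ)..y, exp (-a * (y - s)) * (N (η s) - N (ζ s)) := by
    unfold duhamel
    simp_rw [mul_sub]
    rw [integral_sub (Continuous.intervalIntegrable (by fun_prop) _ _)
      (Continuous.intervalIntegrable (by fun_prop) _ _)]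
    ring
  have hNdist : ∀ s ∈ Icc 0 y, |N (η s) - N (ζ s)| ≤ L * D * exp (-0 * s) := by
    intro s hs
    rw [neg_zero, zero_mul, exp_zero, mul_one]
    calc |N (η s) - N (ζ s)| ≤ L * |η s - ζ s| := by
          simpa only [Real.dist_eq] using hlip.dist_le_mul _ (hηU s hs) _ (hζU s hs)
      _ ≤ L * D := by gcongr; exact hdist s hs
  have hI := abs_integral_exp_mul_le_of_lt le_rfl ha (by positivity) hy hNdist
  rw [neg_zero, zero_mul, exp_zero, mul_one, sub_zero] at hI
  rw [hsub, abs_mul, abs_of_pos (by positivity : 0 < 1 / ε)]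
  calc 1 / ε * |∫ s in (0:ℝ)..y, exp (-a * (y - s)) * (N (η s) - N (ζ s))|
      ≤ 1 / ε * (L * D / a) := by gcongr
    _ = L * D / (ε * a) := by field_simp

end Duhamel

section WeightedBall

variable {a b ε η₀ K m : ℝ} {N : ℝ → ℝ}

/-- The closed ball of radius `m` in the paper's space `Y` with weight `e^{b y}`. -/
def weightedBall (m b : ℝ) : Set (ℝ≥0 →ᵇ ℝ) := {g | ∀ y : ℝ≥0, |g y| ≤ m * exp (-b * y)}

theorem isClosed_weightedBall : IsClosed (weightedBall m b) := by
  rw [weightedBall, ofPred_forall]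
  exact isClosed_iInter fun y => isClosed_le (continuous_abs.comp (continuous_eval_const y))
    continuous_const

theorem abs_apply_toNNReal_le {g : ℝ≥0 →ᵇ ℝ} (hg : g ∈ weightedBall m b) {s : ℝ} (hs : 0 ≤ s) :
    |g s.toNNReal| ≤ m * exp (-b * s) := by
  simpa only [Real.coe_toNNReal s hs] using hg s.toNNReal

theorem abs_duhamel_comp_toNNReal_le (hb : 0 < b) (hab : b ≤ a) (hε : 0 < ε) (hK : 0 ≤ K)
    (hquad : ∀ x, |x| ≤ m → |N x| ≤ K / 2 * x ^ 2) (hm : |η₀| + K * m ^ 2 / (2 * ε * b) ≤ m)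
    {g : ℝ≥0 →ᵇ ℝ} (hg : g ∈ weightedBall m b) (y : ℝ≥0) :
    |duhamel a ε η₀ N (g ∘ Real.toNNReal) y| ≤ m * exp (-b * y) :=
  (abs_duhamel_le hb hab hε hK hquad y.coe_nonneg fun _ hs => abs_apply_toNNReal_le hg hs.1).trans
    (mul_le_mul_of_nonneg_right hm (exp_pos _).le)

theorem abs_duhamel_comp_toNNReal_sub_le {L : ℝ≥0} (hb : 0 ≤ b) (ha : 0 < a) (hε : 0 < ε)
    (hN : Continuous N) (hlip : LipschitzOnWith L N (Metric.closedBall 0 m))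
    (hL : (L : ℝ) ≤ ε * a / 2) {g₁ g₂ : ℝ≥0 →ᵇ ℝ} (hg₁ : g₁ ∈ weightedBall m b)
    (hg₂ : g₂ ∈ weightedBall m b) (y : ℝ≥0) :
    |duhamel a ε η₀ N (g₁ ∘ Real.toNNReal) y - duhamel a ε η₀ N (g₂ ∘ Real.toNNReal) y| ≤
      1 / 2 * dist g₁ g₂ := by
  have hball : ∀ g ∈ weightedBall m b, ∀ s ∈ Icc (0:ℝ) y, g s.toNNReal ∈ Metric.closedBall 0 m :=
    fun g hg s hs => by
      rw [mem_closedBall_zero_iff, Real.norm_eq_abs]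
      exact abs_le_of_abs_le_mul_exp_neg hb hs.1 (abs_apply_toNNReal_le hg hs.1)
  have hdist : ∀ s ∈ Icc (0:ℝ) y, |g₁ s.toNNReal - g₂ s.toNNReal| ≤ dist g₁ g₂ := fun s _ => by
    simpa only [Real.dist_eq] using
      BoundedContinuousFunction.dist_coe_le_dist (f := g₁) (g := g₂) s.toNNReal
  refine (abs_duhamel_sub_le ha hε hN hlip (g₁.continuous.comp continuous_real_toNNReal)
    (g₂.continuous.comp continuous_real_toNNReal) y.coe_nonneg dist_nonneg (hball g₁ hg₁)
    (hball g₂ hg₂) hdist).trans ?_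
  rw [div_le_iff₀ (by positivity)]
  nlinarith [(dist_nonneg : 0 ≤ dist g₁ g₂)]

theorem existsUnique_fixedPoint_duhamel {L : ℝ≥0} (hb : 0 < b) (hab : b ≤ a) (hε : 0 < ε)
    (hK : 0 ≤ K) (hN : Continuous N) (hquad : ∀ x, |x| ≤ m → |N x| ≤ K / 2 * x ^ 2)
    (hlip : LipschitzOnWith L N (Metric.closedBall 0 m)) (hL : (L : ℝ) ≤ ε * a / 2)
    (hm : |η₀| + K * m ^ 2 / (2 * ε * b) ≤ m) :
    ∃! g, g ∈ weightedBall m b ∧ ∀ y : ℝ≥0, g y = duhamel a ε η₀ N (g ∘ Real.toNNReal) y := by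
  set S := weightedBall m b
  have hmaps := fun (g : S) => abs_duhamel_comp_toNNReal_le hb hab hε hK hquad hm g.2
  let T : S → S := fun g => ⟨.ofNormedAddCommGroup _
    ((continuous_duhamel hN (g.1.continuous.comp continuous_real_toNNReal)).comp
      NNReal.continuous_coe) m fun y => abs_le_of_abs_le_mul_exp_neg hb.le y.coe_nonneg
        (hmaps g y), hmaps g⟩
  have : CompleteSpace S := isClosed_weightedBall.completeSpace_coe
  have hm0 : 0 ≤ m := le_trans (by positivity) hm
  have : Nonempty S := ⟨⟨0, fun y => by simpa using mul_nonneg hm0 (exp_pos _).le⟩⟩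
  have hT : ContractingWith (1 / 2) T := by
    refine ⟨by norm_num, LipschitzWith.of_dist_le_mul fun g₁ g₂ => ?_⟩
    refine (BoundedContinuousFunction.dist_le (by positivity)).mpr fun y => ?_
    rw [Real.dist_eq, Subtype.dist_eq, NNReal.coe_div, NNReal.coe_one, NNReal.coe_two]
    exact abs_duhamel_comp_toNNReal_sub_le hb.le (by linarith) hε hN hlip hL g₁.2 g₂.2 y
  refine ⟨(hT.fixedPoint T).1, ⟨(hT.fixedPoint T).2, fun y => ?_⟩, ?_⟩
  · exact congrArg (fun g : S => g.1 y) hT.fixedPoint_isFixedPt.symm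
  · rintro g ⟨hgS, hgfix⟩
    have hfix : Function.IsFixedPt T ⟨g, hgS⟩ :=
      Subtype.ext (BoundedContinuousFunction.ext fun y => (hgfix y).symm)
    exact congrArg Subtype.val (hT.fixedPoint_unique hfix)

end WeightedBall

theorem exists_unique_decaying_solution {a b ε η₀ K m : ℝ} {N : ℝ → ℝ} {L : ℝ≥0} (hb : 0 < b)
    (hab : b ≤ a) (hε : 0 < ε) (hK : 0 ≤ K) (hN : Continuous N)
    (hquad : ∀ x, |x| ≤ m → |N x| ≤ K / 2 * x ^ 2)
    (hlip : LipschitzOnWith L N (Metric.closedBall 0 m)) (hL : (L : ℝ) ≤ ε * a / 2)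
    (hm : |η₀| + K * m ^ 2 / (2 * ε * b) ≤ m) :
    ∃ η : ℝ → ℝ, ContinuousOn η (Ici 0) ∧ (∀ y ≥ (0:ℝ), η y = duhamel a ε η₀ N η y) ∧
      (∀ y ≥ (0:ℝ), |η y| ≤ m * exp (-b * y)) ∧
      ∀ ζ : ℝ → ℝ, ContinuousOn ζ (Ici 0) → (∀ y ≥ (0:ℝ), ζ y = duhamel a ε η₀ N ζ y) →
        (∀ y ≥ (0:ℝ), |ζ y| ≤ m * exp (-b * y)) → EqOn ζ η (Ici 0) := by
  obtain ⟨g, ⟨hgS, hgfix⟩, hguniq⟩ :=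
    existsUnique_fixedPoint_duhamel hb hab hε hK hN hquad hlip hL hm
  refine ⟨g ∘ Real.toNNReal, (g.continuous.comp continuous_real_toNNReal).continuousOn,
    fun y hy => ?_, fun y hy => abs_apply_toNNReal_le hgS hy, ?_⟩
  · simpa only [Function.comp_apply, Real.coe_toNNReal y hy] using hgfix y.toNNReal
  intro ζ hζc hζfix hζbd y hy
  let gζ : ℝ≥0 →ᵇ ℝ := .ofNormedAddCommGroup (fun q => ζ q)
    (hζc.comp_continuous NNReal.continuous_coe fun q => q.coe_nonneg) m fun q =>
      abs_le_of_abs_le_mul_exp_neg hb.le q.coe_nonneg (hζbd q q.coe_nonneg)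
  have hext : EqOn (gζ ∘ Real.toNNReal) ζ (Ici 0) := fun s hs => by
    simp [gζ, Real.coe_toNNReal s hs]
  have hgζ : gζ = g := hguniq gζ ⟨fun q => hζbd q q.coe_nonneg, fun q => by
    rw [duhamel_congr q.coe_nonneg (hext.mono Icc_subset_Ici_self)]
    exact hζfix q q.coe_nonneg⟩
  calc ζ y = gζ y.toNNReal := (hext hy).symm
    _ = g y.toNNReal := by rw [hgζ]

theorem stmt_9_general (ν₀ ε K : ℝ) (hν₀ : 0 < ν₀) (hε : 0 < ε) (hK : 0 < K)
    (N : ℝ → ℝ) (hN1 : ContDiff ℝ 1 N) (hN'0 : deriv N 0 = 0)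
    (hquad : ∃ ρ > (0:ℝ), ∀ x : ℝ, |x| ≤ ρ → |N x| ≤ (K/2) * x^2)
    (a : ℝ) (ha : ν₀ / ε ≤ a) :
    ∃ d > (0:ℝ), ∃ C > (0:ℝ), ∀ η₀ : ℝ, |η₀| ≤ d →
      ∃ η : ℝ → ℝ, ContinuousOn η (Set.Ici 0) ∧
        (∀ y ≥ (0:ℝ), η y = Real.exp (-a*y) * η₀ +
            (1/ε) * ∫ s in (0:ℝ)..y, Real.exp (-a*(y-s)) * N (η s)) ∧
        (∀ y ≥ (0:ℝ), |η y| ≤ C * |η₀| * Real.exp (-(ν₀/ε) * y)) ∧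
        ∀ ζ : ℝ → ℝ, ContinuousOn ζ (Set.Ici 0) →
          (∀ y ≥ (0:ℝ), ζ y = Real.exp (-a*y) * η₀ +
              (1/ε) * ∫ s in (0:ℝ)..y, Real.exp (-a*(y-s)) * N (ζ s)) →
          (∀ y ≥ (0:ℝ), |ζ y| ≤ C * |η₀| * Real.exp (-(ν₀/ε) * y)) →
          Set.EqOn ζ η (Set.Ici 0) := by
  obtain ⟨ρ, hρ, hq⟩ := hquad
  have hb : 0 < ν₀ / ε := div_pos hν₀ hε
  have hL : 0 < ε * (ν₀ / ε) / 2 := by positivity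
  obtain ⟨ρ₁, hρ₁, hlip⟩ :=
    exists_lipschitzOnWith_closedBall_of_deriv_eq_zero hN1 hN'0 (Real.toNNReal_pos.mpr hL)
  refine ⟨min (min ρ ρ₁ / 2) (ε * (ν₀ / ε) / (2 * K)), by positivity, 2, two_pos,
    fun η₀ hη₀ => ?_⟩
  have hradius : 2 * |η₀| ≤ min ρ ρ₁ := by linarith [hη₀.trans (min_le_left _ _)]
  have hsmall : 2 * K * |η₀| ≤ ε * (ν₀ / ε) := by
    have h := hη₀.trans (min_le_right _ _)
    rw [le_div_iff₀ (by positivity)] at h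
    linarith
  refine exists_unique_decaying_solution hb ha hε hK.le hN1.continuous
    (fun x hx => hq x (hx.trans (hradius.trans (min_le_left _ _))))
    (hlip.mono (Metric.closedBall_subset_closedBall (hradius.trans (min_le_right _ _))))
    ?_ ?_
  · rw [Real.coe_toNNReal _ hL.le]
    gcongr
  · have hquadratic : K * (2 * |η₀|) ^ 2 / (2 * ε * (ν₀ / ε)) ≤ |η₀| := by
      rw [div_le_iff₀ (by positivity)]
      nlinarith [abs_nonneg η₀]
    linarith

theorem stmt_9 (ν₀ ε K : ℝ) (hν₀ : 0 < ν₀) (hε : 0 < ε) (hK : 0 < K)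
    (N : ℝ → ℝ) (hN1 : ContDiff ℝ 1 N) (hN0 : N 0 = 0) (hN'0 : deriv N 0 = 0)
    (hquad : ∃ ρ > (0:ℝ), ∀ x : ℝ, |x| ≤ ρ → |N x| ≤ (K/2) * x^2)
    (a : ℝ) (ha : ν₀ / ε ≤ a) :
    ∃ d > (0:ℝ), ∃ C > (0:ℝ), ∀ η₀ : ℝ, |η₀| ≤ d →
      ∃ η : ℝ → ℝ, ContinuousOn η (Set.Ici 0) ∧
        (∀ y ≥ (0:ℝ), η y = Real.exp (-a*y) * η₀ +
            (1/ε) * ∫ s in (0:ℝ)..y, Real.exp (-a*(y-s)) * N (η s)) ∧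
        (∀ y ≥ (0:ℝ), |η y| ≤ C * |η₀| * Real.exp (-(ν₀/ε) * y)) ∧
        ∀ ζ : ℝ → ℝ, ContinuousOn ζ (Set.Ici 0) →
          (∀ y ≥ (0:ℝ), ζ y = Real.exp (-a*y) * η₀ +
              (1/ε) * ∫ s in (0:ℝ)..y, Real.exp (-a*(y-s)) * N (ζ s)) →
          (∀ y ≥ (0:ℝ), |ζ y| ≤ C * |η₀| * Real.exp (-(ν₀/ε) * y)) →
          Set.EqOn ζ η (Set.Ici 0) :=
  stmt_9_general ν₀ ε K hν₀ hε hK N hN1 hN'0 hquad a ha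
end

section
/- Let n ≥ 2 be an integer, δ > 0, ε > 0, μ > 0. For r ≥ 1 and continuous bounded χ : [1,∞) → ℝ, define I₃(r) = (ε(n−1)/μ) ∫_1^r e^{-(δ/(εμ n))(rⁿ − τⁿ)} τ^{n-1} (∫_τ^∞ |χ(s)|/s^{2n-1} ds) dτ. Then I₃(r) ≤ (ε²(n−1)/δ) · ( ∫_r^∞ |χ(s)|/s^{2n-1} ds + (εμ/δ) sup_{s≥1} |χ(s)| ). -/
/-!
Put `F τ = ∫_τ^∞ |χ s| / s^(2n-1) ds`, `C = sup_{s ≥ 1} |χ s|` and `a = δ / (ε μ n)`. On `[τ, r]`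
the integrand of `F` is at most `C`, so `F τ ≤ C (r - τ) + F r`. The kernel
`k τ = exp (-a (rⁿ - τⁿ)) τ^(n-1)` has the primitive `exp (-a (rⁿ - τⁿ)) / (n a)`, whence
`∫_1^r k ≤ 1 / (n a) = ε μ / δ`; and as `n (r - τ) ≤ rⁿ - τⁿ` for `τ ≥ 1`, one more explicit
primitive gives `∫_1^r k τ (r - τ) dτ ≤ (ε μ / δ)²`.
-/

open MeasureTheory Set

lemma natCast_mul_pow_pred_mul_sub_le_pow_sub_pow {x y : ℝ} (hy : 0 ≤ y) (hyx : y ≤ x) (n : ℕ) :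
    n * y ^ (n - 1) * (x - y) ≤ x ^ n - y ^ n := by
  rw [← geom_sum₂_mul]
  gcongr ?_ * _
  calc (n : ℝ) * y ^ (n - 1) = ∑ i ∈ Finset.range n, y ^ i * y ^ (n - 1 - i) :=
        (geom_sum₂_self y n).symm
    _ ≤ ∑ i ∈ Finset.range n, x ^ i * y ^ (n - 1 - i) := by gcongr

section Kernel

variable {a : ℝ} {n : ℕ} {b r : ℝ}

lemma hasDerivAt_exp_neg_mul_pow_sub_pow (a : ℝ) (n : ℕ) (r τ : ℝ) :
    HasDerivAt (fun x => Real.exp (-a * (r ^ n - x ^ n)))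
      (Real.exp (-a * (r ^ n - τ ^ n)) * (a * n * τ ^ (n - 1))) τ := by
  have := (((hasDerivAt_pow n τ).const_sub (r ^ n)).const_mul (-a)).exp
  exact this.congr_deriv (by ring)

lemma integral_exp_mul_pow_pred_le (ha : 0 < a) (hn : 0 < n) (b r : ℝ) :
    ∫ τ in b..r, Real.exp (-a * (r ^ n - τ ^ n)) * τ ^ (n - 1) ≤ 1 / (n * a) := by
  have hderiv (τ : ℝ) : HasDerivAt (fun x => Real.exp (-a * (r ^ n - x ^ n)) / (n * a))
      (Real.exp (-a * (r ^ n - τ ^ n)) * τ ^ (n - 1)) τ :=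
    ((hasDerivAt_exp_neg_mul_pow_sub_pow a n r τ).div_const _).congr_deriv (by field_simp)
  rw [intervalIntegral.integral_eq_sub_of_hasDerivAt (fun τ _ => hderiv τ)
    (Continuous.intervalIntegrable (by fun_prop) _ _)]
  simp only [sub_self, mul_zero, Real.exp_zero]
  exact sub_le_self _ (by positivity)

lemma integral_exp_mul_pow_pred_mul_pow_sub_pow_le (ha : 0 < a) (hn : 0 < n)
    (hbr : b ^ n ≤ r ^ n) :
    ∫ τ in b..r, Real.exp (-a * (r ^ n - τ ^ n)) * τ ^ (n - 1) * (r ^ n - τ ^ n) ≤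
      1 / (n * a ^ 2) := by
  -- the primitive comes from integrating by parts against `exp (-a * (r ^ n - x ^ n)) / (n * a)`
  have hderiv (τ : ℝ) : HasDerivAt
      (fun x => (r ^ n - x ^ n + 1 / a) * Real.exp (-a * (r ^ n - x ^ n)) / (n * a))
      (Real.exp (-a * (r ^ n - τ ^ n)) * τ ^ (n - 1) * (r ^ n - τ ^ n)) τ := by
    have := ((((hasDerivAt_pow n τ).const_sub (r ^ n)).add_const (1 / a)).mul
      (hasDerivAt_exp_neg_mul_pow_sub_pow a n r τ)).div_const (n * a)
    refine this.congr_deriv ?_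
    field_simp
    ring
  rw [intervalIntegral.integral_eq_sub_of_hasDerivAt (fun τ _ => hderiv τ)
    (Continuous.intervalIntegrable (by fun_prop) _ _)]
  have hb : 0 ≤ (r ^ n - b ^ n + 1 / a) * Real.exp (-a * (r ^ n - b ^ n)) / (n * a) := by
    have : 0 ≤ r ^ n - b ^ n := sub_nonneg.2 hbr
    positivity
  have hr : (r ^ n - r ^ n + 1 / a) * Real.exp (-a * (r ^ n - r ^ n)) / (n * a) =
      1 / (n * a ^ 2) := by
    simp only [sub_self, mul_zero, Real.exp_zero, zero_add, mul_one]
    field_simp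
  linarith

lemma integral_exp_mul_pow_pred_mul_sub_le (ha : 0 < a) (hn : 0 < n) (hb : 1 ≤ b)
    (hbr : b ≤ r) :
    ∫ τ in b..r, Real.exp (-a * (r ^ n - τ ^ n)) * τ ^ (n - 1) * (r - τ) ≤ (1 / (n * a)) ^ 2 := by
  have hn' : (0 : ℝ) < n := by exact_mod_cast hn
  calc ∫ τ in b..r, Real.exp (-a * (r ^ n - τ ^ n)) * τ ^ (n - 1) * (r - τ)
      ≤ ∫ τ in b..r,
          (1 / n) * (Real.exp (-a * (r ^ n - τ ^ n)) * τ ^ (n - 1) * (r ^ n - τ ^ n)) := by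
        refine intervalIntegral.integral_mono_on hbr
          (Continuous.intervalIntegrable (by fun_prop) _ _)
          (Continuous.intervalIntegrable (by fun_prop) _ _) fun τ ⟨hbτ, hτr⟩ => ?_
        have hτ : 1 ≤ τ := hb.trans hbτ
        have hsub : r - τ ≤ (r ^ n - τ ^ n) / n := by
          rw [le_div_iff₀' hn']
          calc (n : ℝ) * (r - τ) ≤ n * τ ^ (n - 1) * (r - τ) := by
                gcongr
                exact le_mul_of_one_le_right hn'.le (one_le_pow₀ hτ)
            _ ≤ r ^ n - τ ^ n :=
                natCast_mul_pow_pred_mul_sub_le_pow_sub_pow (by linarith) hτr n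
        calc Real.exp (-a * (r ^ n - τ ^ n)) * τ ^ (n - 1) * (r - τ)
            ≤ Real.exp (-a * (r ^ n - τ ^ n)) * τ ^ (n - 1) * ((r ^ n - τ ^ n) / n) := by
              have : 0 ≤ τ := by linarith
              gcongr
          _ = _ := by ring
    _ = (1 / n) * ∫ τ in b..r, Real.exp (-a * (r ^ n - τ ^ n)) * τ ^ (n - 1) * (r ^ n - τ ^ n) :=
        intervalIntegral.integral_const_mul _ _
    _ ≤ (1 / n) * (1 / (n * a ^ 2)) := by
        gcongr
        exact integral_exp_mul_pow_pred_mul_pow_sub_pow_le ha hn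
          (pow_le_pow_left₀ (by linarith) hbr n)
    _ = (1 / (n * a)) ^ 2 := by ring

lemma integral_exp_mul_pow_pred_mul_le (ha : 0 < a) (hn : 0 < n) (hb : 1 ≤ b) (hbr : b ≤ r)
    {f : ℝ → ℝ} (hf : IntervalIntegrable f volume b r) {C D : ℝ} (hC : 0 ≤ C) (hD : 0 ≤ D)
    (hfle : ∀ τ ∈ Icc b r, f τ ≤ C * (r - τ) + D) :
    ∫ τ in b..r, Real.exp (-a * (r ^ n - τ ^ n)) * τ ^ (n - 1) * f τ ≤
      D * (1 / (n * a)) + C * (1 / (n * a)) ^ 2 := by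
  calc ∫ τ in b..r, Real.exp (-a * (r ^ n - τ ^ n)) * τ ^ (n - 1) * f τ
      ≤ ∫ τ in b..r, Real.exp (-a * (r ^ n - τ ^ n)) * τ ^ (n - 1) * (C * (r - τ) + D) := by
        refine intervalIntegral.integral_mono_on hbr (hf.continuousOn_mul (by fun_prop))
          (Continuous.intervalIntegrable (by fun_prop) _ _) fun τ hτ => ?_
        have : 0 ≤ τ := by linarith [hτ.1]
        gcongr
        exact hfle τ hτ
    _ = C * (∫ τ in b..r, Real.exp (-a * (r ^ n - τ ^ n)) * τ ^ (n - 1) * (r - τ)) +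
          D * ∫ τ in b..r, Real.exp (-a * (r ^ n - τ ^ n)) * τ ^ (n - 1) := by
        rw [← intervalIntegral.integral_const_mul, ← intervalIntegral.integral_const_mul,
          ← intervalIntegral.integral_add (Continuous.intervalIntegrable (by fun_prop) _ _)
            (Continuous.intervalIntegrable (by fun_prop) _ _)]
        congr 1 with τ
        ring
    _ ≤ C * (1 / (n * a)) ^ 2 + D * (1 / (n * a)) := by
        gcongr
        · exact integral_exp_mul_pow_pred_mul_sub_le ha hn hb hbr
        · exact integral_exp_mul_pow_pred_le ha hn b r
    _ = D * (1 / (n * a)) + C * (1 / (n * a)) ^ 2 := by ring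

end Kernel

section TailIntegral

variable {g : ℝ → ℝ}

lemma antitoneOn_setIntegral_Ioi {b : ℝ} (hg : IntegrableOn g (Ioi b))
    (hg0 : ∀ s ∈ Ioi b, 0 ≤ g s) :
    AntitoneOn (fun τ => ∫ s in Ioi τ, g s) (Ici b) := fun _ hτ _ _ hτσ =>
  setIntegral_mono_set (hg.mono_set (Ioi_subset_Ioi hτ))
    ((ae_restrict_iff' measurableSet_Ioi).2 <| .of_forall fun s hs =>
      hg0 s (hτ.out.trans_lt hs))
    (Ioi_subset_Ioi hτσ).eventuallyLE

lemma setIntegral_Ioi_le_mul_sub_add {τ r C : ℝ} (hg : IntegrableOn g (Ioi τ)) (hτr : τ ≤ r)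
    (hgC : ∀ s ∈ Ioc τ r, g s ≤ C) :
    ∫ s in Ioi τ, g s ≤ C * (r - τ) + ∫ s in Ioi r, g s := by
  rw [← Ioc_union_Ioi_eq_Ioi hτr, setIntegral_union (Ioc_disjoint_Ioi le_rfl) measurableSet_Ioi
    (hg.mono_set Ioc_subset_Ioi_self) (hg.mono_set (Ioi_subset_Ioi hτr))]
  gcongr
  calc ∫ s in Ioc τ r, g s ≤ ∫ _ in Ioc τ r, C :=
        setIntegral_mono_on (hg.mono_set Ioc_subset_Ioi_self)
          (integrableOn_const measure_Ioc_lt_top.ne) measurableSet_Ioc hgC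
    _ = C * (r - τ) := by
        rw [setIntegral_const, Real.volume_real_Ioc_of_le hτr, smul_eq_mul, mul_comm]

end TailIntegral

lemma integrableOn_Ioi_div_pow {f : ℝ → ℝ} {C : ℝ} {m : ℕ} (hm : 1 < m)
    (hf : ContinuousOn f (Ici 1)) (hfC : ∀ s, 1 ≤ s → |f s| ≤ C) :
    IntegrableOn (fun s => f s / s ^ m) (Ioi 1) := by
  have hdom : IntegrableOn (fun s : ℝ => C * s ^ (-(m : ℝ))) (Ioi 1) :=
    (integrableOn_Ioi_rpow_of_lt (by norm_cast; omega) one_pos).const_mul C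
  refine hdom.integrable.mono' ?_ ((ae_restrict_iff' measurableSet_Ioi).2 <|
    .of_forall fun s (hs : 1 < s) => ?_)
  · exact ((hf.mono Ioi_subset_Ici_self).div (continuousOn_pow m) fun s hs =>
      pow_ne_zero _ (by linarith [hs.out])).aestronglyMeasurable measurableSet_Ioi
  · have hs0 : 0 < s := by linarith
    rw [Real.rpow_neg hs0.le, Real.rpow_natCast, norm_div, Real.norm_eq_abs, Real.norm_eq_abs,
      abs_of_pos (pow_pos hs0 m), ← div_eq_mul_inv]
    exact div_le_div_of_nonneg_right (hfC s hs.le) (pow_pos hs0 m).le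

theorem stmt_10 (n : ℕ) (hn : 2 ≤ n) (δ ε μ : ℝ) (hδ : 0 < δ) (hε : 0 < ε) (hμ : 0 < μ)
    (r : ℝ) (hr : 1 ≤ r) (χ : ℝ → ℝ)
    (hcont : ContinuousOn χ (Set.Ici 1))
    (hbdd : BddAbove (Set.range fun s : Set.Ici (1:ℝ) => |χ s|)) :
    (ε * ((n:ℝ)-1) / μ) *
        ∫ τ in (1:ℝ)..r, Real.exp (-(δ/(ε*μ*n)) * (r^n - τ^n)) * τ^(n-1) *
          (∫ s in Set.Ioi τ, |χ s| / s ^ (2*n-1)) ≤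
      (ε^2 * ((n:ℝ)-1) / δ) *
        ((∫ s in Set.Ioi r, |χ s| / s ^ (2*n-1)) +
          (ε*μ/δ) * ⨆ s : Set.Ici (1:ℝ), |χ s|) := by
  set C := ⨆ s : Ici (1:ℝ), |χ s|
  have hC (s : ℝ) (hs : 1 ≤ s) : |χ s| ≤ C := le_ciSup hbdd ⟨s, hs⟩
  have hC0 : 0 ≤ C := (abs_nonneg _).trans (hC 1 le_rfl)
  set g : ℝ → ℝ := fun s => |χ s| / s ^ (2 * n - 1)
  have hg0 (s : ℝ) (hs : s ∈ Ioi 1) : 0 ≤ g s :=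
    div_nonneg (abs_nonneg _) (pow_nonneg (by linarith [hs.out]) _)
  have hg : IntegrableOn g (Ioi 1) :=
    integrableOn_Ioi_div_pow (by omega) hcont.abs fun s hs => (abs_abs _).le.trans (hC s hs)
  have hgC (s : ℝ) (hs : 1 ≤ s) : g s ≤ C :=
    (div_le_self (abs_nonneg _) (one_le_pow₀ hs)).trans (hC s hs)
  have hF : AntitoneOn (fun τ => ∫ s in Ioi τ, g s) (Ici 1) := antitoneOn_setIntegral_Ioi hg hg0
  have hkey := integral_exp_mul_pow_pred_mul_le (a := δ / (ε * μ * n)) (n := n) (by positivity)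
    (by omega) le_rfl hr ((hF.mono (uIcc_of_le hr ▸ Icc_subset_Ici_self)).intervalIntegrable) hC0
    (setIntegral_nonneg measurableSet_Ioi fun s hs => hg0 s (hr.trans_lt hs))
    fun τ hτ => setIntegral_Ioi_le_mul_sub_add (hg.mono_set (Ioi_subset_Ioi hτ.1)) hτ.2
      fun s hs => hgC s (hτ.1.trans hs.1.le)
  have hinv : 1 / (n * (δ / (ε * μ * n))) = ε * μ / δ := by
    have : (0 : ℝ) < n := by positivity
    field_simp
  have hcoef : 0 ≤ ε * ((n : ℝ) - 1) / μ := by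
    have : (2 : ℝ) ≤ n := by exact_mod_cast hn
    have : 0 ≤ (n : ℝ) - 1 := by linarith
    positivity
  rw [hinv] at hkey
  calc _ ≤ ε * ((n : ℝ) - 1) / μ *
        ((∫ s in Ioi r, g s) * (ε * μ / δ) + C * (ε * μ / δ) ^ 2) :=
        mul_le_mul_of_nonneg_left hkey hcoef
    _ = _ := by field_simp
end
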